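/- (Lemma 9.1(ii), type 2 tails) Under the linear quantile regression setup with type 2 tails of index ξ > 0, there exists a vector c ∈ ℝ^d with μ_Xᵀc = 1, xᵀc > 0 and K(x) = (xᵀc)^{1/ξ} for all x ∈ 𝐗, such that, setting a_T := −1/F_u⁻¹(1/T) for integers T with 1/T ∈ (0,η], for every compact set 𝒦 ⊂ (0,∞) one has sup_{k ∈ 𝒦} ‖a_T·γ(k/T) + k^{−ξ}·c‖ → 0 as the integer T → ∞ (for T large enough that k/T ∈ (0,η] for all k ∈ 𝒦). -/

import Mathlib

/-
Write `q = F_u⁻¹`. Regular variation of `F_u` with index `-1/ξ` forces `F_u (q σ) ~ σ` as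
`σ → 0⁺`, so tail equivalence gives `F (v q σ | x) / σ → K x · v ^ (-1/ξ)`. Inverting these
limits, `F⁻¹ (σ | x) / q σ → K x ^ ξ` and `q (k σ) / q σ → k ^ (-ξ)`, the latter uniformly for
`k` in a compact set because it is monotone in `k` (Pólya). By the linear specification,
`xᵀ γ(σ) / q σ → K x ^ ξ` for every `x` in the support, and the support spans `ℝ^d` since the
second-moment matrix is positive definite; hence `γ(σ) / q σ` converges to some `c`, which
satisfies `xᵀc = K x ^ ξ` and `μ_Xᵀc = 1`. Finally
`a_T γ(k/T) = -(q (k/T) / q (1/T)) · γ(k/T) / q (k/T) → -k ^ (-ξ) c`.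
-/

open MeasureTheory Filter Topology Real

-- `sInf` is junk unless the set is nonempty and bounded below: the lemmas below take witnesses
-- `z₀` (`F z₀ ≤ τ`) and `z₁` (`τ < F z₁`) that rule this out.
noncomputable def quantile (F : ℝ → ℝ) (τ : ℝ) : ℝ := sInf {z | τ < F z}

section Quantile

variable {F : ℝ → ℝ} {τ τ' z z₀ z₁ : ℝ}

theorem Monotone.mem_lowerBounds_setOf_lt (hF : Monotone F) (h₀ : F z₀ ≤ τ) :
    z₀ ∈ lowerBounds {z | τ < F z} :=
  fun _ hz => le_of_not_gt fun hlt => (hF hlt.le |>.trans h₀).not_gt hz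

theorem Monotone.quantile_mem_Icc (hF : Monotone F) (h₀ : F z₀ ≤ τ) (h₁ : τ < F z₁) :
    quantile F τ ∈ Set.Icc z₀ z₁ :=
  ⟨le_csInf ⟨z₁, h₁⟩ (hF.mem_lowerBounds_setOf_lt h₀),
    csInf_le ⟨z₀, hF.mem_lowerBounds_setOf_lt h₀⟩ h₁⟩

theorem Monotone.apply_le_of_lt_quantile (hF : Monotone F) (h₀ : F z₀ ≤ τ)
    (hz : z < quantile F τ) : F z ≤ τ :=
  le_of_not_gt fun h => hz.not_ge (hF.quantile_mem_Icc h₀ h).2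

theorem Monotone.le_apply_quantile (hF : Monotone F)
    (hrc : ContinuousWithinAt F (Set.Ici (quantile F τ)) (quantile F τ))
    (h₀ : F z₀ ≤ τ) (h₁ : τ < F z₁) : τ ≤ F (quantile F τ) := by
  refine _root_.ge_of_tendsto (hrc.mono Set.Ioi_subset_Ici_self) ?_
  filter_upwards [self_mem_nhdsWithin] with z hz
  obtain ⟨w, hw, hwz⟩ := (csInf_lt_iff ⟨z₀, hF.mem_lowerBounds_setOf_lt h₀⟩ ⟨z₁, h₁⟩).1 hz
  exact hw.le.trans (hF hwz.le)

theorem Monotone.quantile_le_quantile (hF : Monotone F) (h₀ : F z₀ ≤ τ) (hττ' : τ ≤ τ')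
    (h₁ : τ' < F z₁) : quantile F τ ≤ quantile F τ' :=
  csInf_le_csInf ⟨z₀, hF.mem_lowerBounds_setOf_lt h₀⟩ ⟨z₁, h₁⟩ fun _ hz => hττ'.trans_lt hz

theorem Monotone.tendsto_quantile_atBot (hF : Monotone F)
    (hF0 : Tendsto F atBot (𝓝 0)) (hpos : ∀ z, 0 < F z) :
    Tendsto (quantile F) (𝓝[>] 0) atBot := by
  refine tendsto_atBot.2 fun z => ?_
  filter_upwards [self_mem_nhdsWithin,
    (eventually_lt_nhds (hpos z)).filter_mono nhdsWithin_le_nhds] with σ hσ hσz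
  obtain ⟨z₀, hz₀⟩ := (hF0.eventually_lt_const (Set.mem_Ioi.1 hσ)).exists
  exact (hF.quantile_mem_Icc hz₀.le hσz).2

end Quantile

section RpowThreshold

variable {L v ξ : ℝ}

theorem mul_rpow_neg_one_div_eq (hv : 0 < v) : L * v ^ (-1 / ξ) = L / v ^ ξ⁻¹ := by
  rw [neg_div, one_div, rpow_neg hv.le, div_eq_mul_inv]

theorem one_lt_mul_rpow_neg_one_div_iff (hL : 0 < L) (hv : 0 < v) (hξ : 0 < ξ) :
    1 < L * v ^ (-1 / ξ) ↔ v < L ^ ξ := by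
  rw [mul_rpow_neg_one_div_eq hv, one_lt_div (by positivity),
    rpow_inv_lt_iff_of_pos hv.le hL.le hξ]

theorem mul_rpow_neg_one_div_lt_one_iff (hL : 0 < L) (hv : 0 < v) (hξ : 0 < ξ) :
    L * v ^ (-1 / ξ) < 1 ↔ L ^ ξ < v := by
  rw [mul_rpow_neg_one_div_eq hv, div_lt_one (by positivity),
    lt_rpow_inv_iff_of_pos hL.le hv.le hξ]

end RpowThreshold

theorem Monotone.tendsto_quantile_div {α : Type*} {l : Filter α} {H : ℝ → ℝ} (hH : Monotone H)
    {σ q : α → ℝ} (hσ : ∀ᶠ a in l, 0 < σ a) (hq : ∀ᶠ a in l, q a < 0) {L ξ : ℝ} (hL : 0 < L)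
    (hξ : 0 < ξ) (h : ∀ v > 0, Tendsto (fun a => H (v * q a) / σ a) l (𝓝 (L * v ^ (-1 / ξ)))) :
    Tendsto (fun a => quantile H (σ a) / q a) l (𝓝 (L ^ ξ)) := by
  have hbracket : ∀ v₁ v₂, 0 < v₁ → v₁ < L ^ ξ → L ^ ξ < v₂ →
      ∀ᶠ a in l, quantile H (σ a) / q a ∈ Set.Icc v₁ v₂ := by
    intro v₁ v₂ hv₁ hv₁L hv₂L
    have hv₂ : 0 < v₂ := (rpow_pos_of_pos hL ξ).trans hv₂L
    have h₁ := (h v₁ hv₁).eventually_const_lt ((one_lt_mul_rpow_neg_one_div_iff hL hv₁ hξ).2 hv₁L)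
    have h₂ := (h v₂ hv₂).eventually_lt_const ((mul_rpow_neg_one_div_lt_one_iff hL hv₂ hξ).2 hv₂L)
    filter_upwards [h₁, h₂, hσ, hq] with a h₁ h₂ hσa hqa
    rw [one_lt_div hσa] at h₁
    rw [div_lt_one hσa] at h₂
    obtain ⟨hlo, hhi⟩ := hH.quantile_mem_Icc h₂.le h₁
    exact ⟨(le_div_iff_of_neg hqa).2 hhi, (div_le_iff_of_neg hqa).2 hlo⟩
  have hLξ : 0 < L ^ ξ := rpow_pos_of_pos hL ξ
  refine tendsto_order.2 ⟨fun u hu => ?_, fun w hw => ?_⟩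
  · obtain ⟨v₁, hv₁, hv₁L⟩ := exists_between (max_lt hu hLξ)
    filter_upwards [hbracket v₁ (L ^ ξ + 1) ((le_max_right _ _).trans_lt hv₁) hv₁L
      (lt_add_one _)] with a ha
    exact ((le_max_left _ _).trans_lt hv₁).trans_le ha.1
  · obtain ⟨v₂, hLv₂, hv₂⟩ := exists_between hw
    filter_upwards [hbracket (L ^ ξ / 2) v₂ (half_pos hLξ) (half_lt_self hLξ) hLv₂] with a ha
    exact ha.2.trans_lt hv₂

theorem tendstoLocallyUniformlyOn_of_antitoneOn {ι : Type*} {l : Filter ι} {f : ι → ℝ → ℝ}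
    {g : ℝ → ℝ} {U : Set ℝ} (hU : IsOpen U) (hg : ContinuousOn g U)
    (hf : ∀ᶠ i in l, AntitoneOn (f i) U) (hlim : ∀ x ∈ U, Tendsto (fun i => f i x) l (𝓝 (g x))) :
    TendstoLocallyUniformlyOn f g l U := by
  rw [Metric.tendstoLocallyUniformlyOn_iff]
  intro ε hε x hx
  have hnear : {y | y ∈ U ∧ dist (g y) (g x) < ε / 3} ∈ 𝓝 x :=
    inter_mem (hU.mem_nhds hx) ((hg.continuousAt (hU.mem_nhds hx)).preimage_mem_nhds
      (Metric.ball_mem_nhds _ (by positivity)))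
  obtain ⟨δ, hδ, hball⟩ := Metric.mem_nhds_iff.1 hnear
  have hnear' : ∀ y, |y - x| < δ → y ∈ U ∧ |g y - g x| < ε / 3 := fun y hy =>
    hball (by rwa [Metric.mem_ball, Real.dist_eq])
  obtain ⟨haU, hga⟩ := hnear' (x - δ / 2) (by rw [abs_lt]; constructor <;> linarith)
  obtain ⟨hbU, hgb⟩ := hnear' (x + δ / 2) (by rw [abs_lt]; constructor <;> linarith)
  refine ⟨Set.Ioo (x - δ / 2) (x + δ / 2),
    mem_nhdsWithin_of_mem_nhds (Ioo_mem_nhds (by linarith) (by linarith)), ?_⟩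
  filter_upwards [hf, Metric.tendsto_nhds.1 (hlim _ haU) (ε / 3) (by positivity),
    Metric.tendsto_nhds.1 (hlim _ hbU) (ε / 3) (by positivity)] with i hfi hfa hfb y hy
  obtain ⟨hyU, hgy⟩ := hnear' y (by rw [abs_lt]; constructor <;> linarith [hy.1, hy.2])
  -- antitonicity sandwiches `f i y` between the values at `x ± δ / 2`, which are close to `g x`
  have hle : f i (x + δ / 2) ≤ f i y := hfi hyU hbU hy.2.le
  have hge : f i y ≤ f i (x - δ / 2) := hfi haU hyU hy.1.le
  rw [Real.dist_eq] at hfa hfb ⊢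
  rw [abs_lt] at hfa hfb hga hgb hgy ⊢
  constructor <;> linarith

theorem TendstoUniformlyOn.tendsto_prod_sub {ι α E : Type*} [SeminormedAddCommGroup E]
    {F : ι → α → E} {f : α → E} {l : Filter ι} {s : Set α} (h : TendstoUniformlyOn F f l s) :
    Tendsto (fun p : ι × α => F p.1 p.2 - f p.2) (l ×ˢ 𝓟 s) (𝓝 0) := by
  rw [Metric.tendstoUniformlyOn_iff] at h
  refine Metric.tendsto_nhds.2 fun ε hε => eventually_prod_principal_iff.2 ?_
  filter_upwards [h ε hε] with i hi k hk
  rw [dist_zero_right, ← dist_eq_norm, dist_comm]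
  exact hi k hk

theorem tendsto_smul_sub_smul {β E : Type*} [NormedAddCommGroup E] [NormedSpace ℝ E]
    {P : Filter β} {r ρ : β → ℝ} {w : β → E} {c : E} (hr : Tendsto (fun b => r b - ρ b) P (𝓝 0))
    (hρ : IsBoundedUnder (· ≤ ·) P (norm ∘ ρ)) (hw : Tendsto w P (𝓝 c)) :
    Tendsto (fun b => r b • w b - ρ b • c) P (𝓝 0) := by
  have hw' : Tendsto (fun b => w b - c) P (𝓝 0) := by simpa using hw.sub_const c
  have h := ((hr.smul hw').add (hr.smul_const c)).add (hρ.smul_tendsto_zero hw')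
  simp only [zero_smul, add_zero] at h
  refine h.congr fun b => ?_
  simp only [sub_smul, smul_sub]
  abel

theorem tendsto_mul_prod_principal_nhdsGT {ι : Type*} {l : Filter ι} {s : ι → ℝ}
    (hs : Tendsto s l (𝓝[>] 0)) {K : Set ℝ} (hK : Bornology.IsBounded K) (hK0 : K ⊆ Set.Ioi 0) :
    Tendsto (fun p : ι × ℝ => p.2 * s p.1) (l ×ˢ 𝓟 K) (𝓝[>] 0) := by
  refine tendsto_nhdsWithin_iff.2 ⟨?_, eventually_prod_principal_iff.2 ?_⟩
  · obtain ⟨C, hC⟩ := hK.exists_norm_le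
    have hbdd : IsBoundedUnder (· ≤ ·) (l ×ˢ 𝓟 K) (norm ∘ fun p : ι × ℝ => p.2) :=
      isBoundedUnder_of_eventually_le (a := C)
        (eventually_prod_principal_iff.2 (Eventually.of_forall fun _ k hk => hC k hk))
    simpa [mul_comm] using
      ((tendsto_nhdsWithin_iff.1 hs).1.comp tendsto_fst).zero_smul_isBoundedUnder_le hbdd
  · filter_upwards [tendsto_nhdsWithin_iff.1 hs |>.2] with i hi k hk
    exact mul_pos (hK0 hk) (Set.mem_Ioi.1 hi)

def RegularlyVaryingAtBot (f : ℝ → ℝ) (ρ : ℝ) : Prop :=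
  ∀ v > (0 : ℝ), Tendsto (fun z => f (v * z) / f z) atBot (𝓝 (v ^ ρ))

namespace RegularlyVaryingAtBot

variable {f : ℝ → ℝ} {ρ : ℝ}

theorem tendsto_zero (hf : RegularlyVaryingAtBot f ρ) (hmono : Monotone f)
    (hpos : ∀ z, 0 < f z) (hρ : ρ < 0) : Tendsto f atBot (𝓝 0) := by
  have hm : Tendsto f atBot (𝓝 (⨅ z, f z)) :=
    tendsto_atBot_ciInf hmono ⟨0, by rintro _ ⟨z, rfl⟩; exact (hpos z).le⟩
  suffices ⨅ z, f z = 0 by rwa [this] at hm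
  by_contra hm0
  have h2 := (hm.comp (tendsto_id.const_mul_atBot two_pos)).div hm hm0
  rw [div_self hm0] at h2
  exact (rpow_lt_one_of_one_lt_of_neg one_lt_two hρ).ne (tendsto_nhds_unique (hf 2 two_pos) h2)

theorem tendsto_quantile_atBot (hf : RegularlyVaryingAtBot f ρ) (hmono : Monotone f)
    (hpos : ∀ z, 0 < f z) (hρ : ρ < 0) : Tendsto (quantile f) (𝓝[>] 0) atBot :=
  hmono.tendsto_quantile_atBot (hf.tendsto_zero hmono hpos hρ) hpos

theorem tendsto_apply_quantile_div (hf : RegularlyVaryingAtBot f ρ) (hmono : Monotone f)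
    (hpos : ∀ z, 0 < f z) (hrc : ∀ z, ContinuousWithinAt f (Set.Ici z) z) (hρ : ρ < 0) :
    Tendsto (fun σ => f (quantile f σ) / σ) (𝓝[>] 0) (𝓝 1) := by
  have hf0 := hf.tendsto_zero hmono hpos hρ
  have hq := hf.tendsto_quantile_atBot hmono hpos hρ
  have hσ : ∀ᶠ σ in 𝓝[>] (0 : ℝ), 0 < σ ∧ σ < f 0 :=
    eventually_mem_nhdsWithin.and ((eventually_lt_nhds (hpos 0)).filter_mono nhdsWithin_le_nhds)
  refine tendsto_order.2 ⟨fun u hu => ?_, fun w hw => ?_⟩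
  · filter_upwards [hσ] with σ ⟨hσ0, hσf⟩
    obtain ⟨z₀, hz₀⟩ := (hf0.eventually_lt_const hσ0).exists
    rw [lt_div_iff₀ hσ0]
    exact (mul_lt_of_lt_one_left hσ0 hu).trans_le (hmono.le_apply_quantile (hrc _) hz₀.le hσf)
  · -- `v ^ ρ → 1` as `v → 1⁺`, and `f (v q) ≤ σ` for `v > 1` since `v q < q = f⁻¹(σ)`
    have hcont : Tendsto (fun v : ℝ => v ^ ρ) (𝓝[>] 1) (𝓝 1) := by
      simpa using (continuousAt_rpow_const 1 ρ (Or.inl one_ne_zero)).tendsto.mono_left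
        nhdsWithin_le_nhds
    obtain ⟨v, hv1, hvw⟩ := (eventually_mem_nhdsWithin.and
      (hcont.eventually_const_lt (inv_lt_one_of_one_lt₀ hw))).exists
    have hw0 : 0 < w := one_pos.trans hw
    filter_upwards [((hf v (one_pos.trans hv1)).comp hq).eventually_const_lt hvw, hσ,
      hq.eventually (eventually_lt_atBot 0)] with σ hratio hσ hqσ
    obtain ⟨z₀, hz₀⟩ := (hf0.eventually_lt_const hσ.1).exists
    have hle : f (v * quantile f σ) ≤ σ :=
      hmono.apply_le_of_lt_quantile hz₀.le (by nlinarith [Set.mem_Ioi.1 hv1])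
    rw [Function.comp_apply, lt_div_iff₀ (hpos _)] at hratio
    rw [div_lt_iff₀ hσ.1]
    calc f (quantile f σ) = w * (w⁻¹ * f (quantile f σ)) := by field_simp
      _ < w * f (v * quantile f σ) := mul_lt_mul_of_pos_left hratio hw0
      _ ≤ w * σ := mul_le_mul_of_nonneg_left hle hw0.le

theorem tendsto_comp_quantile_div (hf : RegularlyVaryingAtBot f ρ) (hmono : Monotone f)
    (hpos : ∀ z, 0 < f z) (hrc : ∀ z, ContinuousWithinAt f (Set.Ici z) z) (hρ : ρ < 0)
    {H : ℝ → ℝ} {L : ℝ} (hH : Tendsto (fun z => H z / f z) atBot (𝓝 L)) {v : ℝ} (hv : 0 < v) :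
    Tendsto (fun σ => H (v * quantile f σ) / σ) (𝓝[>] 0) (𝓝 (L * v ^ ρ)) := by
  have hq := hf.tendsto_quantile_atBot hmono hpos hρ
  have h := ((hH.comp (hq.const_mul_atBot hv)).mul ((hf v hv).comp hq)).mul
    (hf.tendsto_apply_quantile_div hmono hpos hrc hρ)
  rw [mul_one] at h
  refine h.congr fun σ => ?_
  simp only [Function.comp_apply]
  rw [div_mul_div_cancel₀ (hpos _).ne', div_mul_div_cancel₀ (hpos _).ne']

variable {ξ : ℝ}

theorem tendsto_quantile_div_quantile (hf : RegularlyVaryingAtBot f (-1 / ξ)) (hξ : 0 < ξ)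
    (hmono : Monotone f) (hpos : ∀ z, 0 < f z) (hrc : ∀ z, ContinuousWithinAt f (Set.Ici z) z)
    {H : ℝ → ℝ} (hHmono : Monotone H) {L : ℝ} (hL : 0 < L)
    (hH : Tendsto (fun z => H z / f z) atBot (𝓝 L)) :
    Tendsto (fun σ => quantile H σ / quantile f σ) (𝓝[>] 0) (𝓝 (L ^ ξ)) := by
  have hρ : -1 / ξ < 0 := div_neg_of_neg_of_pos (by norm_num) hξ
  have hq := hf.tendsto_quantile_atBot hmono hpos hρ
  exact hHmono.tendsto_quantile_div self_mem_nhdsWithin (hq.eventually (eventually_lt_atBot 0))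
    hL hξ fun v hv => hf.tendsto_comp_quantile_div hmono hpos hrc hρ hH hv

theorem tendsto_quantile_mul_div (hf : RegularlyVaryingAtBot f (-1 / ξ)) (hξ : 0 < ξ)
    (hmono : Monotone f) (hpos : ∀ z, 0 < f z) (hrc : ∀ z, ContinuousWithinAt f (Set.Ici z) z)
    {k : ℝ} (hk : 0 < k) :
    Tendsto (fun σ => quantile f (k * σ) / quantile f σ) (𝓝[>] 0) (𝓝 (k ^ (-ξ))) := by
  have hρ : -1 / ξ < 0 := div_neg_of_neg_of_pos (by norm_num) hξ
  have hq := hf.tendsto_quantile_atBot hmono hpos hρ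
  have hself : Tendsto (fun z => f z / f z) atBot (𝓝 1) :=
    tendsto_const_nhds.congr fun z => (div_self (hpos z).ne').symm
  have h := hmono.tendsto_quantile_div (σ := fun σ => k * σ)
    (eventually_mem_nhdsWithin.mono fun σ hσ => mul_pos hk hσ)
    (hq.eventually (eventually_lt_atBot 0))
    (inv_pos.2 hk) hξ fun v hv => by
      refine ((hf.tendsto_comp_quantile_div hmono hpos hrc hρ hself hv).const_mul k⁻¹).congr
        (fun σ => by rw [inv_mul_eq_div, div_div, mul_comm σ]) |>.trans ?_
      rw [one_mul]
  rwa [inv_rpow hk.le, ← rpow_neg hk.le] at h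

theorem tendstoUniformlyOn_quantile_mul_div (hf : RegularlyVaryingAtBot f (-1 / ξ)) (hξ : 0 < ξ)
    (hmono : Monotone f) (hpos : ∀ z, 0 < f z) (hrc : ∀ z, ContinuousWithinAt f (Set.Ici z) z)
    {ι : Type*} {l : Filter ι} {s : ι → ℝ} (hs : Tendsto s l (𝓝[>] 0)) {K : Set ℝ}
    (hK : IsCompact K) (hK0 : K ⊆ Set.Ioi 0) :
    TendstoUniformlyOn (fun i k => quantile f (k * s i) / quantile f (s i)) (fun k => k ^ (-ξ))
      l K := by
  have hρ : -1 / ξ < 0 := div_neg_of_neg_of_pos (by norm_num) hξ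
  have hf0 := hf.tendsto_zero hmono hpos hρ
  obtain ⟨M, hM⟩ := hK.bddAbove
  set M' := max M 0 + 1
  have hM' : 0 < M' := by positivity
  have hKU : K ⊆ Set.Ioo 0 M' := fun k hk =>
    ⟨hK0 hk, (hM hk).trans_lt ((le_max_left M 0).trans_lt (lt_add_one _))⟩
  refine (tendstoLocallyUniformlyOn_iff_tendstoUniformlyOn_of_compact hK).1
    (TendstoLocallyUniformlyOn.mono ?_ hKU)
  refine tendstoLocallyUniformlyOn_of_antitoneOn isOpen_Ioo
    (fun k hk => (continuousAt_rpow_const _ _ (Or.inl hk.1.ne')).continuousWithinAt) ?_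
    fun k hk => (hf.tendsto_quantile_mul_div hξ hmono hpos hrc hk.1).comp hs
  have hsmall : ∀ᶠ σ in 𝓝[>] (0 : ℝ), 0 < σ ∧ σ * M' < f 0 ∧ quantile f σ < 0 := by
    refine eventually_mem_nhdsWithin.and (Eventually.and ?_
      ((hf.tendsto_quantile_atBot hmono hpos hρ).eventually (eventually_lt_atBot 0)))
    filter_upwards [(eventually_lt_nhds (div_pos (hpos 0) hM')).filter_mono nhdsWithin_le_nhds]
      with σ hσ
    exact (lt_div_iff₀ hM').1 hσ
  filter_upwards [hs.eventually hsmall] with i ⟨hs0, hsM, hq⟩ k hk k' hk' hkk'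
  obtain ⟨z₀, hz₀⟩ := (hf0.eventually_lt_const (mul_pos hk.1 hs0)).exists
  have hk'f : k' * s i < f 0 := by
    calc k' * s i ≤ M' * s i := mul_le_mul_of_nonneg_right hk'.2.le hs0.le
      _ < f 0 := by rwa [mul_comm]
  exact div_le_div_of_nonpos_of_le hq.le
    (hmono.quantile_le_quantile hz₀.le (mul_le_mul_of_nonneg_right hkk' hs0.le) hk'f)

theorem tendsto_neg_div_quantile_smul_add {E : Type*} [NormedAddCommGroup E] [NormedSpace ℝ E]
    (hf : RegularlyVaryingAtBot f (-1 / ξ)) (hξ : 0 < ξ)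
    (hmono : Monotone f) (hpos : ∀ z, 0 < f z) (hrc : ∀ z, ContinuousWithinAt f (Set.Ici z) z)
    {γ : ℝ → E} {c : E} (hγ : Tendsto (fun τ => (quantile f τ)⁻¹ • γ τ) (𝓝[>] 0) (𝓝 c))
    {ι : Type*} {l : Filter ι} {s : ι → ℝ} (hs : Tendsto s l (𝓝[>] 0)) {K : Set ℝ}
    (hK : IsCompact K) (hK0 : K ⊆ Set.Ioi 0) :
    Tendsto (fun p : ι × ℝ => (-1 / quantile f (s p.1)) • γ (p.2 * s p.1) + p.2 ^ (-ξ) • c)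
      (l ×ˢ 𝓟 K) (𝓝 0) := by
  have hρ : -1 / ξ < 0 := div_neg_of_neg_of_pos (by norm_num) hξ
  have hq := hf.tendsto_quantile_atBot hmono hpos hρ
  have hks := tendsto_mul_prod_principal_nhdsGT hs hK.isBounded hK0
  have hr := (hf.tendstoUniformlyOn_quantile_mul_div hξ hmono hpos hrc hs hK hK0).tendsto_prod_sub
  have hbdd : IsBoundedUnder (· ≤ ·) (l ×ˢ 𝓟 K) (norm ∘ fun p : ι × ℝ => p.2 ^ (-ξ)) := by
    obtain ⟨C, hC⟩ := hK.exists_bound_of_continuousOn fun k hk =>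
      (continuousAt_rpow_const _ _ (Or.inl (hK0 hk).ne')).continuousWithinAt
    exact isBoundedUnder_of_eventually_le (a := C)
      (eventually_prod_principal_iff.2 (Eventually.of_forall fun _ k hk => hC k hk))
  have h := (tendsto_smul_sub_smul hr hbdd (hγ.comp hks)).neg
  rw [neg_zero] at h
  refine h.congr' ?_
  filter_upwards [hks.eventually (hq.eventually (eventually_lt_atBot 0))] with p hqp
  simp only [Function.comp_apply, smul_smul, neg_sub]
  rw [div_mul_eq_mul_div, mul_inv_cancel₀ hqp.ne, neg_div, neg_smul, sub_eq_neg_add]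

end RegularlyVaryingAtBot

section SecondMoment

open Matrix

variable {d : ℕ}

theorem dotProduct_secondMoment_mulVec {μ : Measure (Fin d → ℝ)}
    (hint : ∀ i j, Integrable (fun x : Fin d → ℝ => x i * x j) μ) (v : Fin d → ℝ) :
    v ⬝ᵥ (Matrix.of fun i j => ∫ x, x i * x j ∂μ) *ᵥ v = ∫ x, (x ⬝ᵥ v) ^ 2 ∂μ := by
  have hsq : ∀ x : Fin d → ℝ, (x ⬝ᵥ v) ^ 2 = ∑ i, ∑ j, v i * (x i * x j) * v j := by
    intro x
    simp only [dotProduct, sq, Finset.sum_mul_sum]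
    exact Finset.sum_congr rfl fun i _ => Finset.sum_congr rfl fun j _ => by ring
  simp_rw [hsq]
  rw [integral_finsetSum _ fun i _ => integrable_finsetSum _ fun j _ =>
    ((hint i j).const_mul (v i)).mul_const (v j)]
  refine Finset.sum_congr rfl fun i _ => ?_
  rw [integral_finsetSum _ fun j _ => ((hint i j).const_mul (v i)).mul_const (v j),
    Matrix.mulVec, dotProduct, Finset.mul_sum]
  refine Finset.sum_congr rfl fun j _ => ?_
  rw [integral_mul_const, integral_const_mul, Matrix.of_apply]
  ring

theorem span_eq_top_of_posDef_secondMoment {μ : Measure (Fin d → ℝ)} [IsFiniteMeasure μ]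
    {S : Set (Fin d → ℝ)} (hS : IsCompact S) (hμS : ∀ᵐ x ∂μ, x ∈ S)
    (hpos : (Matrix.of fun i j : Fin d => ∫ x, x i * x j ∂μ).PosDef) :
    Submodule.span ℝ S = ⊤ := by
  have hint : ∀ i j, Integrable (fun x : Fin d → ℝ => x i * x j) μ := fun i j => by
    have := ((continuous_apply i).mul (continuous_apply j)).continuousOn.integrableOn_compact
      (μ := μ) hS
    rwa [IntegrableOn, Measure.restrict_eq_self_of_ae_mem hμS] at this
  by_contra hne
  obtain ⟨f, hf0, hfS⟩ := Submodule.exists_le_ker_of_lt_top _ (Ne.lt_top hne)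
  set v := (dotProductEquiv ℝ (Fin d)).symm f
  have hfv : ∀ y, f y = y ⬝ᵥ v := fun y => by
    rw [dotProduct_comm, ← dotProductEquiv_apply_apply, LinearEquiv.apply_symm_apply]
  have hv0 : v ≠ 0 := fun hv => hf0 (by simpa [v] using hv)
  have hvS : ∀ᵐ x ∂μ, (x ⬝ᵥ v) ^ 2 = 0 := by
    filter_upwards [hμS] with x hx
    rw [← hfv, LinearMap.mem_ker.1 (hfS (Submodule.subset_span hx)), sq, mul_zero]
  have := hpos.dotProduct_mulVec_pos hv0
  rw [star_trivial, dotProduct_secondMoment_mulVec hint, integral_eq_zero_of_ae hvS] at this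
  exact this.false

end SecondMoment

theorem exists_tendsto_of_tendsto_dotProduct {d : ℕ} {S : Set (Fin d → ℝ)}
    (hS : Submodule.span ℝ S = ⊤) {α : Type*} {l : Filter α} {u : α → Fin d → ℝ}
    {g : (Fin d → ℝ) → ℝ} (h : ∀ x ∈ S, Tendsto (fun a => x ⬝ᵥ u a) l (𝓝 (g x))) :
    ∃ c, Tendsto u l (𝓝 c) := by
  obtain ⟨b, hbS, hb, hbli⟩ := exists_linearIndependent ℝ S
  have : Finite b := hbli.finite
  set Φ := (Matrix.of fun (x : b) j => (x : Fin d → ℝ) j).mulVecLin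
  have hker : LinearMap.ker Φ = ⊥ := by
    refine LinearMap.ker_eq_bot'.2 fun y hy => dotProduct_self_eq_zero.1 ?_
    have hspan : Submodule.span ℝ b ≤ LinearMap.ker (dotProductEquiv ℝ (Fin d) y) :=
      Submodule.span_le.2 fun x hx => by
        simpa [Φ, Matrix.mulVec, dotProduct_comm] using congrFun hy ⟨x, hx⟩
    have hy' := hspan (hb ▸ hS ▸ Submodule.mem_top : y ∈ Submodule.span ℝ b)
    simpa using hy'
  obtain ⟨Ψ, hΨ⟩ := Φ.exists_leftInverse_of_injective hker
  refine ⟨Ψ fun x => g x, ?_⟩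
  have hΦ : Tendsto (fun a => Φ (u a)) l (𝓝 fun x => g x) :=
    tendsto_pi_nhds.2 fun x => h x (hbS x.2)
  have hu : u = fun a => Ψ (Φ (u a)) := funext fun a => (LinearMap.congr_fun hΨ (u a)).symm
  rw [hu]
  exact (Ψ.continuous_of_finiteDimensional.tendsto _).comp hΦ

theorem extremal_qr_lem91ii_type2_general
    (d : ℕ)
    (μ : Measure (Fin d → ℝ)) [IsProbabilityMeasure μ]
    (Xs : Set (Fin d → ℝ))
    (hXssupp : ∀ x, x ∈ Xs ↔ ∀ U ∈ 𝓝 x, 0 < μ U)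
    (hXscpt : IsCompact Xs)
    (hposdef : (Matrix.of fun i j : Fin d => ∫ x, x i * x j ∂μ).PosDef)
    (η : ℝ) (hη : η ∈ Set.Ioc (0:ℝ) 1)
    (γ : ℝ → Fin d → ℝ)
    (F : (Fin d → ℝ) → ℝ → ℝ)
    (hFmono : ∀ x ∈ Xs, Monotone (F x))
    (hlin : ∀ τ ∈ Set.Ioc (0:ℝ) η, ∀ x ∈ Xs, sInf {z | τ < F x z} = ∑ i, x i * γ τ i)
    (Fu : ℝ → ℝ)
    (hFumono : Monotone Fu)
    (hFurc : ∀ z : ℝ, ContinuousWithinAt Fu (Set.Ici z) z)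
    (hFuinv : ∀ τ ∈ Set.Ioc (0:ℝ) η, sInf {z | τ < Fu z} = ∑ i, (∫ x, x i ∂μ) * γ τ i)
    (K : (Fin d → ℝ) → ℝ)
    (hKpos : ∀ x ∈ Xs, 0 < K x)
    (ξ : ℝ) (hξ : 0 < ξ)
    (hFupos : ∀ z : ℝ, 0 < Fu z)
    (hreg : ∀ v > (0:ℝ), Tendsto (fun z => Fu (v * z) / Fu z) atBot (𝓝 (v ^ (-1/ξ))))
    (htaileq : TendstoUniformlyOn (fun z x => F x z / Fu z) K atBot Xs)
    :
    ∃ c : Fin d → ℝ, (∑ i, (∫ x, x i ∂μ) * c i) = 1 ∧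
      (∀ x ∈ Xs, 0 < (∑ i, x i * c i) ∧ K x = (∑ i, x i * c i) ^ (1/ξ)) ∧
      ∀ Ks : Set ℝ, IsCompact Ks → Ks ⊆ Set.Ioi 0 →
        ∀ ε > (0:ℝ), ∀ᶠ T : ℕ in atTop, ∀ k ∈ Ks,
          ‖(-1 / sInf {z | (1:ℝ) / (T:ℝ) < Fu z}) • γ (k / (T:ℝ)) + (k ^ (-ξ)) • c‖ < ε := by
  have hreg : RegularlyVaryingAtBot Fu (-1 / ξ) := hreg
  have hXs : Xs = μ.support := Set.ext fun x => (hXssupp x).trans (μ.mem_support_iff_forall x).symm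
  have hspan := span_eq_top_of_posDef_secondMoment hXscpt (hXs ▸ μ.support_mem_ae) hposdef
  have hη' : ∀ᶠ τ in 𝓝[>] (0 : ℝ), τ ∈ Set.Ioc 0 η := Ioc_mem_nhdsGT hη.1
  set u : ℝ → Fin d → ℝ := fun τ => (quantile Fu τ)⁻¹ • γ τ
  have hu : ∀ x ∈ Xs, Tendsto (fun τ => x ⬝ᵥ u τ) (𝓝[>] 0) (𝓝 (K x ^ ξ)) := fun x hx =>
    (hreg.tendsto_quantile_div_quantile hξ hFumono hFupos hFurc (hFmono x hx) (hKpos x hx)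
      (htaileq.tendsto_at hx)).congr' <| by
        filter_upwards [hη'] with τ hτ
        rw [dotProduct_smul, smul_eq_mul, inv_mul_eq_div]
        exact congrArg (· / _) (hlin τ hτ x hx)
  obtain ⟨c, hc⟩ := exists_tendsto_of_tendsto_dotProduct hspan hu
  have hdot : ∀ y, Tendsto (fun τ => y ⬝ᵥ u τ) (𝓝[>] 0) (𝓝 (y ⬝ᵥ c)) := fun y =>
    ((continuous_const.dotProduct continuous_id).tendsto c).comp hc
  have hKc : ∀ x ∈ Xs, x ⬝ᵥ c = K x ^ ξ := fun x hx => tendsto_nhds_unique (hdot x) (hu x hx)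
  have hq := hreg.tendsto_quantile_atBot hFumono hFupos (div_neg_of_neg_of_pos (by norm_num) hξ)
  refine ⟨c, tendsto_nhds_unique (hdot _) (tendsto_const_nhds.congr' ?_), fun x hx => ?_,
    fun Ks hKs hKs0 ε hε => ?_⟩
  · filter_upwards [hη', hq.eventually (eventually_lt_atBot 0)] with τ hτ hqτ
    rw [dotProduct_smul, smul_eq_mul]
    exact (inv_mul_cancel₀ hqτ.ne).symm.trans (congrArg _ (hFuinv τ hτ))
  · have hKx := hKpos x hx
    change 0 < x ⬝ᵥ c ∧ K x = (x ⬝ᵥ c) ^ (1 / ξ)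
    rw [hKc x hx, ← rpow_mul hKx.le, mul_one_div_cancel hξ.ne', rpow_one]
    exact ⟨rpow_pos_of_pos hKx ξ, rfl⟩
  · have hT : Tendsto (fun T : ℕ => (T : ℝ)⁻¹) atTop (𝓝[>] 0) :=
      tendsto_inv_atTop_nhdsGT_zero.comp tendsto_natCast_atTop_atTop
    have h := hreg.tendsto_neg_div_quantile_smul_add hξ hFumono hFupos hFurc hc hT hKs hKs0
    filter_upwards [eventually_prod_principal_iff.1 (Metric.tendsto_nhds.1 h ε hε)] with T hT k hk
    simpa [quantile, div_eq_mul_inv] using hT k hk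

theorem extremal_qr_lem91ii_type2
    (d : ℕ) (hd : 1 ≤ d)
    (μ : Measure (Fin d → ℝ)) [IsProbabilityMeasure μ]
    (Xs : Set (Fin d → ℝ))
    (hXssupp : ∀ x, x ∈ Xs ↔ ∀ U ∈ 𝓝 x, 0 < μ U)
    (hXscpt : IsCompact Xs)
    (hposdef : (Matrix.of fun i j : Fin d => ∫ x, x i * x j ∂μ).PosDef)
    (hmean : ∀ i : Fin d, (∫ x, x i ∂μ) = if (i : ℕ) = 0 then (1:ℝ) else 0)
    (η : ℝ) (hη : η ∈ Set.Ioc (0:ℝ) 1)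
    (γ : ℝ → Fin d → ℝ)
    (F : (Fin d → ℝ) → ℝ → ℝ)
    (hFmono : ∀ x ∈ Xs, Monotone (F x))
    (hFrc : ∀ x ∈ Xs, ∀ z : ℝ, ContinuousWithinAt (F x) (Set.Ici z) z)
    (hFrange : ∀ x ∈ Xs, ∀ z : ℝ, F x z ∈ Set.Icc (0:ℝ) 1)
    (hlin : ∀ τ ∈ Set.Ioc (0:ℝ) η, ∀ x ∈ Xs, sInf {z | τ < F x z} = ∑ i, x i * γ τ i)
    (Fu : ℝ → ℝ)
    (hFumono : Monotone Fu)
    (hFurc : ∀ z : ℝ, ContinuousWithinAt Fu (Set.Ici z) z)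
    (hFurange : ∀ z : ℝ, Fu z ∈ Set.Icc (0:ℝ) 1)
    (hFuinv : ∀ τ ∈ Set.Ioc (0:ℝ) η, sInf {z | τ < Fu z} = ∑ i, (∫ x, x i ∂μ) * γ τ i)
    (K : (Fin d → ℝ) → ℝ)
    (hKcont : ContinuousOn K Xs)
    (hKbdd : BddAbove (K '' Xs))
    (hKpos : ∀ x ∈ Xs, 0 < K x)
    (ξ : ℝ) (hξ : 0 < ξ)
    (hFupos : ∀ z : ℝ, 0 < Fu z)
    (hreg : ∀ v > (0:ℝ), Tendsto (fun z => Fu (v * z) / Fu z) atBot (𝓝 (v ^ (-1/ξ))))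
    (htaileq : TendstoUniformlyOn (fun z x => F x z / Fu z) K atBot Xs)
    :
    ∃ c : Fin d → ℝ, (∑ i, (∫ x, x i ∂μ) * c i) = 1 ∧
      (∀ x ∈ Xs, 0 < (∑ i, x i * c i) ∧ K x = (∑ i, x i * c i) ^ (1/ξ)) ∧
      ∀ Ks : Set ℝ, IsCompact Ks → Ks ⊆ Set.Ioi 0 →
        ∀ ε > (0:ℝ), ∀ᶠ T : ℕ in atTop, ∀ k ∈ Ks,
          ‖(-1 / sInf {z | (1:ℝ) / (T:ℝ) < Fu z}) • γ (k / (T:ℝ)) + (k ^ (-ξ)) • c‖ < ε :=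
  extremal_qr_lem91ii_type2_general d μ Xs hXssupp hXscpt hposdef η hη γ F hFmono hlin Fu hFumono
    hFurc hFuinv K hKpos ξ hξ hFupos hreg htaileq
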